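/- A bipartition λ satisfies ẽ_i^{[1]}λ = 0 for all i ∈ ℤ if and only if λ^{(2)} = ∅ and λ^{(1)} is either empty or equal to the rectangle (a^{a+m}) (that is, a+m rows each of length a) for some integer a ≥ 1 with a + m ≥ 1. Likewise, λ satisfies ẽ_i^{[2]}λ = 0 for all i ∈ ℤ if and only if λ^{(1)} = ∅ and λ^{(2)} is either empty or equal to (a^{a+m}) for some integer a ≥ 1 with a + m ≥ 1. -/

import Mathlib

/-- A partition: a weakly decreasing, eventually zero sequence of nonnegative integers.
`part k` is the `(k+1)`-st part, i.e. the length of row `k+1`. -/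
structure Partn where
  part : ℕ → ℕ
  antitone : ∀ k, part (k + 1) ≤ part k
  finite : ∃ N, ∀ k, N ≤ k → part k = 0

/-- The size `|λ| = Σ_k λ_k` of a partition (all parts beyond the chosen bound vanish). -/
noncomputable def Partn.size (p : Partn) : ℕ :=
  ∑ k ∈ Finset.range (Classical.choose p.finite), p.part k

/-- A bipartition `λ = (λ^{(1)}, λ^{(2)})`: component `0` is `λ^{(1)}`, component `1`
is `λ^{(2)}`. -/
abbrev Bipartn : Type := Fin 2 → Partn

/-- The total number of boxes `|λ| = |λ^{(1)}| + |λ^{(2)}|`. -/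
noncomputable def Bipartn.size (lam : Bipartn) : ℕ := (lam 0).size + (lam 1).size

/-- Row `k` (0-indexed) has an addable box at its end. -/
def AddableRow (p : Partn) (k : ℕ) : Prop :=
  k = 0 ∨ p.part k < p.part (k - 1)

/-- Row `k` (0-indexed) has a removable box at its end. -/
def RemovableRow (p : Partn) (k : ℕ) : Prop :=
  p.part (k + 1) < p.part k

/-- The content of the addable box in row `k` (0-indexed) of component `c`:
for the first component (`c = 0`) the box `(x, y) = (part k + 1, k + 1)` has content
`y - x = k - part k`; for the second component (`c = 1`) it has content
`x - y + m = part k - k + m`. -/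
def contA (m : ℤ) (c : Fin 2) (p : Partn) (k : ℕ) : ℤ :=
  if c = 0 then (k : ℤ) - p.part k else ((p.part k : ℤ) - k) + m

/-- The content of the removable box in row `k` (0-indexed) of component `c`:
for the first component the box `(x, y) = (part k, k + 1)` has content
`y - x = k + 1 - part k`; for the second component it has content
`x - y + m = part k - (k + 1) + m`. -/
def contR (m : ℤ) (c : Fin 2) (p : Partn) (k : ℕ) : ℤ :=
  if c = 0 then ((k : ℤ) + 1) - p.part k else ((p.part k : ℤ) - ((k : ℤ) + 1)) + m

/-- A letter of a signature: a sign (`true` = '+', `false` = '−') together with the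
component and the (0-indexed) row of the corresponding addable/removable box. -/
abbrev Letter : Type := Bool × Fin 2 × ℕ

open Classical in
/-- The letter of content `i` coming from component `c` of a bipartition: `'+'` if that
component has an addable box of content `i`, `'−'` if it has a removable box of content
`i`, nothing otherwise (each component has at most one such box, and not both). -/
noncomputable def compLetter (m : ℤ) (c : Fin 2) (p : Partn) (i : ℤ) : Option Letter :=
  if h : ∃ k, AddableRow p k ∧ contA m c p k = i then some (true, c, Classical.choose h)
  else if h : ∃ k, RemovableRow p k ∧ contR m c p k = i then
    some (false, c, Classical.choose h)
  else none

/-- The `i`-signature of a bipartition for the crystal `[j]` (`ord = 0` encodes `[1]`,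
`ord = 1` encodes `[2]`): for `[1]` the letter of the first component is listed first,
for `[2]` the letter of the second component is listed first. -/
noncomputable def word (m : ℤ) (ord : Fin 2) (lam : Bipartn) (i : ℤ) : List Letter :=
  if ord = 0 then
    (compLetter m 0 (lam 0) i).toList ++ (compLetter m 1 (lam 1) i).toList
  else
    (compLetter m 1 (lam 1) i).toList ++ (compLetter m 0 (lam 0) i).toList

/-- Delete the subword `−+` if it occurs (reduction of the signature). -/
def reduceL : List Letter → List Letter
  | [] => []
  | a :: w =>
    match a.1, reduceL w with
    | false, (true, _) :: tail => tail
    | _, r => a :: r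

/-- The box (component, row) removed by `ẽ_i^{[j]}`: the box of the leftmost '−' in the
reduced `i`-signature; `none` when the reduced signature has no '−', i.e. when
`ẽ_i^{[j]} λ = 0`. -/
noncomputable def eAct (m : ℤ) (ord : Fin 2) (i : ℤ) (lam : Bipartn) :
    Option (Fin 2 × ℕ) :=
  ((reduceL (word m ord lam i)).find? (fun a => !a.1)).map (fun a => a.2)

/-- The box (component, row) added by `f̃_i^{[j]}`: the box of the rightmost '+' in the
reduced `i`-signature; `none` when the reduced signature has no '+', i.e. when
`f̃_i^{[j]} λ = 0`. -/
noncomputable def fAct (m : ℤ) (ord : Fin 2) (i : ℤ) (lam : Bipartn) :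
    Option (Fin 2 × ℕ) :=
  ((reduceL (word m ord lam i)).reverse.find? (fun a => a.1)).map (fun a => a.2)

/-- `mu` is obtained from `lam` by removing the box at the end of row `k` of
component `c`. -/
def RemoveBox (lam : Bipartn) (c : Fin 2) (k : ℕ) (mu : Bipartn) : Prop :=
  (mu c).part k + 1 = (lam c).part k ∧
  (∀ k', k' ≠ k → (mu c).part k' = (lam c).part k') ∧
  (∀ c', c' ≠ c → ∀ k', (mu c').part k' = (lam c').part k')

/-- `mu` is obtained from `lam` by adding a box at the end of row `k` of component `c`. -/
def AddBox (lam : Bipartn) (c : Fin 2) (k : ℕ) (mu : Bipartn) : Prop :=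
  (mu c).part k = (lam c).part k + 1 ∧
  (∀ k', k' ≠ k → (mu c).part k' = (lam c).part k') ∧
  (∀ c', c' ≠ c → ∀ k', (mu c').part k' = (lam c').part k')

/-- `ẽ_i^{[j]} lam = mu` (in particular `ẽ_i^{[j]} lam ≠ 0`). -/
def ERel (m : ℤ) (ord : Fin 2) (i : ℤ) (lam mu : Bipartn) : Prop :=
  ∃ c k, eAct m ord i lam = some (c, k) ∧ RemoveBox lam c k mu

/-- `f̃_i^{[j]} lam = mu` (in particular `f̃_i^{[j]} lam ≠ 0`). -/
def FRel (m : ℤ) (ord : Fin 2) (i : ℤ) (lam mu : Bipartn) : Prop :=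
  ∃ c k, fAct m ord i lam = some (c, k) ∧ AddBox lam c k mu

/-!
If some `ẽ_i^{[1]}`-signature ended in a `'−'`, it would survive reduction; hence the second
component has no removable box, i.e. it is empty, and its only letter is the `'+'` of content
`m`. A `'−'` of the first component then survives unless that `'+'` cancels it, so every
removable box of the first component has content `m`. Removable boxes of one partition have
distinct contents, so there is at most one, and a partition with a single removable box is a
rectangle; content `m` makes it `(a^{a+m})`. For `[2]` the roles of the components swap.
-/

/-- `p` is the rectangle `(a^{a+m})` for some `a ≥ 1` with `a + m ≥ 1`. -/
def Partn.IsRectangle (m : ℤ) (p : Partn) : Prop :=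
  ∃ a : ℕ, 1 ≤ a ∧ 1 ≤ (a : ℤ) + m ∧
    ∀ k : ℕ, (p.part k : ℤ) = if (k : ℤ) < (a : ℤ) + m then (a : ℤ) else 0

def IsMinus (o : Option Letter) : Prop :=
  ∃ x ∈ o, x.1 = false

namespace Partn

variable {p : Partn}

theorem monotone_sub_part (p : Partn) : Monotone fun k : ℕ => (k : ℤ) - p.part k :=
  monotone_nat_of_le_succ fun k => by have := p.antitone k; push_cast; omega

theorem part_eq_of_forall_not_removableRow {k k' : ℕ} (hkk' : k ≤ k')
    (h : ∀ j, k ≤ j → j < k' → ¬ RemovableRow p j) : p.part k' = p.part k := by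
  induction k', hkk' using Nat.le_induction with
  | base => rfl
  | succ n hkn ih =>
    have hn := h n hkn (Nat.lt_succ_self n)
    rw [← ih fun j hkj hjn => h j hkj (hjn.trans (Nat.lt_succ_self n))]
    exact le_antisymm (p.antitone n) (not_lt.1 hn)

theorem part_eq_zero_of_forall_not_removableRow {k : ℕ}
    (h : ∀ j, k ≤ j → ¬ RemovableRow p j) {k' : ℕ} (hkk' : k ≤ k') : p.part k' = 0 := by
  obtain ⟨N, hN⟩ := p.finite
  have hfar := part_eq_of_forall_not_removableRow (le_max_left k' N)
    fun j hj _ => h j (hkk'.trans hj)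
  rw [← hfar, hN _ (le_max_right k' N)]

theorem eq_zero_of_forall_not_removableRow (h : ∀ k, ¬ RemovableRow p k) (k : ℕ) :
    p.part k = 0 :=
  part_eq_zero_of_forall_not_removableRow (fun j _ => h j) (Nat.zero_le k)

theorem not_removableRow_of_eq_zero (h : ∀ k, p.part k = 0) (k : ℕ) : ¬ RemovableRow p k := by
  simp [RemovableRow, h]

theorem part_eq_of_unique_removableRow {k₀ : ℕ} (huniq : ∀ k, RemovableRow p k → k = k₀)
    (k : ℕ) : p.part k = if k ≤ k₀ then p.part k₀ else 0 := by
  split_ifs with hk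
  · exact (part_eq_of_forall_not_removableRow hk
      fun j _ hj hr => by have := huniq j hr; omega).symm
  · exact part_eq_zero_of_forall_not_removableRow
      (fun j hj hr => by have := huniq j hr; omega) (not_le.1 hk)

end Partn

theorem contR_injective (m : ℤ) (c : Fin 2) (p : Partn) : Function.Injective (contR m c p) := by
  have hstrict : StrictMono fun k : ℕ => (k : ℤ) + 1 - p.part k := by
    intro k k' hkk'
    have hsub : ((k + 1 : ℕ) : ℤ) - p.part (k + 1) ≤ k' - p.part k' :=
      p.monotone_sub_part (Nat.succ_le_of_lt hkk')
    have := p.antitone k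
    push_cast at hsub ⊢
    omega
  intro k k' h
  apply hstrict.injective
  change (k : ℤ) + 1 - p.part k = k' + 1 - p.part k'
  simp only [contR] at h
  split_ifs at h <;> omega

theorem contA_ne_contR (m : ℤ) (c : Fin 2) {p : Partn} {k k' : ℕ} (hk' : RemovableRow p k') :
    contA m c p k ≠ contR m c p k' := by
  have key : (k : ℤ) - p.part k ≠ k' + 1 - p.part k' := by
    rcases le_or_gt k k' with h | h
    · have := p.monotone_sub_part h
      simp only at this
      omega
    · have hsub : ((k' + 1 : ℕ) : ℤ) - p.part (k' + 1) ≤ k - p.part k :=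
        p.monotone_sub_part (Nat.succ_le_of_lt h)
      have : p.part (k' + 1) < p.part k' := hk'
      push_cast at hsub
      omega
  simp only [contA, contR]
  split_ifs <;> omega

theorem isMinus_compLetter_iff (m : ℤ) (c : Fin 2) (p : Partn) (i : ℤ) :
    IsMinus (compLetter m c p i) ↔ ∃ k, RemovableRow p k ∧ contR m c p k = i := by
  unfold compLetter
  split_ifs with hA hR
  · simp only [IsMinus, Option.mem_def, Option.some.injEq, exists_eq_left', Bool.true_eq_false,
      false_iff, not_exists, not_and]
    rintro k hk rfl
    exact contA_ne_contR m c hk (Classical.choose_spec hA).2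
  · simpa [IsMinus] using hR
  · simpa [IsMinus] using hR

theorem compLetter_eq_none_iff_of_eq_zero (m : ℤ) (c : Fin 2) {p : Partn}
    (hp : ∀ k, p.part k = 0) (i : ℤ) :
    compLetter m c p i = none ↔ i ≠ if c = 0 then 0 else m := by
  have hR : ¬ ∃ k, RemovableRow p k ∧ contR m c p k = i :=
    fun ⟨k, hk, _⟩ => p.not_removableRow_of_eq_zero hp k hk
  have hA : (∃ k, AddableRow p k ∧ contA m c p k = i) ↔ i = if c = 0 then 0 else m := by
    simp only [AddableRow, contA, hp]
    constructor
    · rintro ⟨k, hk | hk, rfl⟩ <;> split_ifs <;> simp_all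
    · rintro rfl
      exact ⟨0, Or.inl rfl, by split_ifs <;> simp⟩
  unfold compLetter
  split_ifs with h <;> simp_all

theorem contR_eq_of_isRectangle (m : ℤ) (c : Fin 2) {p : Partn} (hp : p.IsRectangle m)
    {k : ℕ} (hk : RemovableRow p k) : contR m c p k = if c = 0 then m else 0 := by
  obtain ⟨a, -, -, hrect⟩ := hp
  have h₁ := hrect k
  have h₂ := hrect (k + 1)
  simp only [RemovableRow] at hk
  simp only [contR]
  split_ifs at h₁ h₂ ⊢ <;> push_cast at * <;> omega

theorem forall_contR_eq_iff (m : ℤ) (c : Fin 2) (p : Partn) :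
    (∀ k, RemovableRow p k → contR m c p k = if c = 0 then m else 0) ↔
      (∀ k, p.part k = 0) ∨ p.IsRectangle m := by
  constructor
  · intro hK
    by_cases hrem : ∃ k, RemovableRow p k
    · obtain ⟨k₀, hk₀⟩ := hrem
      have hshape := p.part_eq_of_unique_removableRow
        fun k hk => contR_injective m c p ((hK k hk).trans (hK k₀ hk₀).symm)
      have hcorner := hK k₀ hk₀
      have hpos := hk₀
      simp only [RemovableRow] at hpos
      rw [hshape (k₀ + 1), if_neg (by omega)] at hpos
      simp only [contR] at hcorner
      refine Or.inr ⟨p.part k₀, hpos, by split_ifs at hcorner <;> omega, fun k => ?_⟩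
      rw [hshape k]
      split_ifs at hcorner ⊢ <;> push_cast <;> omega
    · exact Or.inl (p.eq_zero_of_forall_not_removableRow fun k hk => hrem ⟨k, hk⟩)
  · rintro (hp | hp) k hk
    · exact (p.not_removableRow_of_eq_zero hp k hk).elim
    · exact contR_eq_of_isRectangle m c hp hk

theorem find?_reduceL_eq_none_iff (o₁ o₂ : Option Letter) :
    (reduceL (o₁.toList ++ o₂.toList)).find? (fun a => !a.1) = none ↔
      ¬ IsMinus o₂ ∧ (o₂ = none → ¬ IsMinus o₁) := by
  rcases o₁ with _ | ⟨_ | _, _⟩ <;> rcases o₂ with _ | ⟨_ | _, _⟩ <;> simp [reduceL, IsMinus]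

theorem word_eq (m : ℤ) (ord : Fin 2) (lam : Bipartn) (i : ℤ) :
    word m ord lam i = (compLetter m ord (lam ord) i).toList ++
      (compLetter m (1 - ord) (lam (1 - ord)) i).toList := by
  fin_cases ord <;> simp [word]

theorem eAct_eq_none_iff (m : ℤ) (ord : Fin 2) (i : ℤ) (lam : Bipartn) :
    eAct m ord i lam = none ↔
      ¬ IsMinus (compLetter m (1 - ord) (lam (1 - ord)) i) ∧
        (compLetter m (1 - ord) (lam (1 - ord)) i = none →
          ¬ IsMinus (compLetter m ord (lam ord) i)) := by
  rw [eAct, Option.map_eq_none_iff, word_eq, find?_reduceL_eq_none_iff]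

theorem forall_eAct_eq_none_iff (m : ℤ) (ord : Fin 2) (lam : Bipartn) :
    (∀ i, eAct m ord i lam = none) ↔
      (∀ k, (lam (1 - ord)).part k = 0) ∧
        ((∀ k, (lam ord).part k = 0) ∨ (lam ord).IsRectangle m) := by
  -- the empty partition in component `1 - ord` has its only addable box at the content
  -- of the corner of the rectangle in component `ord`
  have hcontent : (if 1 - ord = 0 then 0 else m) = if ord = 0 then m else 0 := by
    fin_cases ord <;> rfl
  simp only [eAct_eq_none_iff, isMinus_compLetter_iff, ← forall_contR_eq_iff m ord]
  constructor
  · intro H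
    have hempty := (lam (1 - ord)).eq_zero_of_forall_not_removableRow
      fun k hk => (H _).1 ⟨k, hk, rfl⟩
    refine ⟨hempty, fun k hk => ?_⟩
    by_contra hne
    rw [← hcontent] at hne
    exact (H _).2 ((compLetter_eq_none_iff_of_eq_zero m _ hempty _).2 hne) ⟨k, hk, rfl⟩
  · rintro ⟨hempty, hcorner⟩ i
    refine ⟨fun ⟨k, hk, _⟩ => (lam (1 - ord)).not_removableRow_of_eq_zero hempty k hk, ?_⟩
    rintro hnone ⟨k, hk, rfl⟩
    rw [compLetter_eq_none_iff_of_eq_zero m _ hempty, hcontent] at hnone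
    exact hnone (hcorner k hk)

/-- A bipartition is annihilated by all `ẽ_i^{[1]}` iff its second component is empty and
its first component is empty or the rectangle `(a^{a+m})` (with `a ≥ 1`, `a + m ≥ 1`);
and it is annihilated by all `ẽ_i^{[2]}` iff its first component is empty and its second
component is empty or the rectangle `(a^{a+m})` (with `a ≥ 1`, `a + m ≥ 1`). -/
theorem singular_bipartitions_are_rectangles (m : ℤ) (lam : Bipartn) :
    ((∀ i : ℤ, eAct m 0 i lam = none) ↔
      ((∀ k, (lam 1).part k = 0) ∧
        ((∀ k, (lam 0).part k = 0) ∨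
          ∃ a : ℕ, 1 ≤ a ∧ 1 ≤ (a : ℤ) + m ∧
            ∀ k : ℕ, ((lam 0).part k : ℤ) =
              if (k : ℤ) < (a : ℤ) + m then (a : ℤ) else 0))) ∧
    ((∀ i : ℤ, eAct m 1 i lam = none) ↔
      ((∀ k, (lam 0).part k = 0) ∧
        ((∀ k, (lam 1).part k = 0) ∨
          ∃ a : ℕ, 1 ≤ a ∧ 1 ≤ (a : ℤ) + m ∧
            ∀ k : ℕ, ((lam 1).part k : ℤ) =
              if (k : ℤ) < (a : ℤ) + m then (a : ℤ) else 0))) :=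
  ⟨forall_eAct_eq_none_iff m 0 lam, forall_eAct_eq_none_iff m 1 lam⟩
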